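/- arXiv:1702.02912 — 4 statements merged into one kernel-verified Lean document; each statement's English description precedes it below -/
import Mathlib

section
/- Let X_L, X_R ∈ ℂ^{n×m} and let X_L = U Σ Vᴴ be an economic SVD of rank r of X_L. Define the estimated transfer operator Â := X_R V Σ⁻¹ Uᴴ ∈ ℂ^{n×n} (i.e. Â = X_R X_L†) and the projected operator Ã := Uᴴ X_R V Σ⁻¹ ∈ ℂ^{r×r}. If W̃ ∈ ℂ^{r×r} and a diagonal matrix Λ ∈ ℂ^{r×r} satisfy Ã W̃ = W̃ Λ, then the exact-DMD mode matrix W := X_R V Σ⁻¹ W̃ ∈ ℂ^{n×r} satisfies Â W = W Λ. -/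
open Matrix

/-- exact-DMD modes built from eigenvectors of the projected
operator `Ã = Uᴴ X_R V Σ⁻¹` satisfy `Â W = W Λ` for `Â = X_R V Σ⁻¹ Uᴴ`. -/
theorem exact_dmd_modes_satisfy_eigen_relation
    {n m r : ℕ}
    (XL XR : Matrix (Fin n) (Fin m) ℂ)
    (U : Matrix (Fin n) (Fin r) ℂ) (V : Matrix (Fin m) (Fin r) ℂ)
    (S : Matrix (Fin r) (Fin r) ℂ)
    (σ : Fin r → ℝ) (hσ : ∀ i, 0 < σ i)
    (hS : S = Matrix.diagonal fun i => (σ i : ℂ))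
    (hU : Uᴴ * U = 1) (hV : Vᴴ * V = 1)
    (hSVD : XL = U * S * Vᴴ)
    (Wt Λ : Matrix (Fin r) (Fin r) ℂ) (hΛ : Λ.IsDiag)
    (heig : (Uᴴ * XR * V * S⁻¹) * Wt = Wt * Λ) :
    (XR * V * S⁻¹ * Uᴴ) * (XR * V * S⁻¹ * Wt) = (XR * V * S⁻¹ * Wt) * Λ := by
  calc (XR * V * S⁻¹ * Uᴴ) * (XR * V * S⁻¹ * Wt)
      = XR * V * S⁻¹ * ((Uᴴ * XR * V * S⁻¹) * Wt) := by
        simp only [Matrix.mul_assoc]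
    _ = XR * V * S⁻¹ * (Wt * Λ) := by rw [heig]
    _ = (XR * V * S⁻¹ * Wt) * Λ := by simp only [Matrix.mul_assoc]
end

section
/- Let X_L, X_R ∈ ℂ^{n×m} and let X_L = U Σ Vᴴ be an economic SVD of rank r of X_L. Define Â := X_R V Σ⁻¹ Uᴴ and Ã := Uᴴ X_R V Σ⁻¹. If w̃ ∈ ℂ^r is nonzero, λ ∈ ℂ is nonzero, and Ã w̃ = λ w̃, then the vector w := X_R V Σ⁻¹ w̃ ∈ ℂ^n is nonzero and satisfies Â w = λ w; that is, every exact-DMD mode corresponding to a nonzero eigenvalue of the projected operator is a genuine eigenvector of the high-dimensional operator with the same eigenvalue. -/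
open Matrix

/-- every exact-DMD mode corresponding to a nonzero eigenvalue of
the projected operator is a genuine eigenvector of the high-dimensional
operator with the same eigenvalue. -/
theorem exact_dmd_mode_is_eigenvector
    {n m r : ℕ}
    (XL XR : Matrix (Fin n) (Fin m) ℂ)
    (U : Matrix (Fin n) (Fin r) ℂ) (V : Matrix (Fin m) (Fin r) ℂ)
    (S : Matrix (Fin r) (Fin r) ℂ)
    (σ : Fin r → ℝ) (hσ : ∀ i, 0 < σ i)
    (hS : S = Matrix.diagonal fun i => (σ i : ℂ))
    (hU : Uᴴ * U = 1) (hV : Vᴴ * V = 1)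
    (hSVD : XL = U * S * Vᴴ)
    (wt : Fin r → ℂ) (hwt : wt ≠ 0)
    (lam : ℂ) (hlam : lam ≠ 0)
    (heig : (Uᴴ * XR * V * S⁻¹).mulVec wt = lam • wt) :
    (XR * V * S⁻¹).mulVec wt ≠ 0 ∧
    (XR * V * S⁻¹ * Uᴴ).mulVec ((XR * V * S⁻¹).mulVec wt)
      = lam • ((XR * V * S⁻¹).mulVec wt) := by
  have hUw : Uᴴ.mulVec ((XR * V * S⁻¹).mulVec wt) = lam • wt := by
    rw [mulVec_mulVec, ← heig]
    simp only [Matrix.mul_assoc]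
  constructor
  · intro h
    rw [h] at hUw
    simp only [mulVec_zero] at hUw
    exact hwt (by simpa [hlam] using (smul_eq_zero.mp hUw.symm).resolve_left hlam)
  · rw [← mulVec_mulVec, hUw, mulVec_smul]
end

section
/- Let Q ∈ ℂ^{n×l} satisfy Qᴴ Q = I_l, let B_L, B_R ∈ ℂ^{l×m}, and set X_L := Q B_L and X_R := Q B_R. Let B_L = Ũ Σ Vᴴ be an economic SVD of rank k of B_L, and define Ã_B := Ũᴴ B_R V Σ⁻¹ ∈ ℂ^{k×k} and Â := X_R V Σ⁻¹ Ũᴴ Qᴴ ∈ ℂ^{n×n}. If W̃_B ∈ ℂ^{k×k} and a diagonal matrix Λ ∈ ℂ^{k×k} satisfy Ã_B W̃_B = W̃_B Λ, then the recovered high-dimensional randomized-DMD mode matrix W := Q B_R V Σ⁻¹ W̃_B ∈ ℂ^{n×k} satisfies Â W = W Λ. -/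
open Matrix

/-- recovered high-dimensional randomized-DMD modes
`W = Q B_R V Σ⁻¹ W̃_B` satisfy `Â W = W Λ`. -/
theorem randomized_dmd_modes_satisfy_eigen_relation
    {n l m k : ℕ}
    (Q : Matrix (Fin n) (Fin l) ℂ) (hQ : Qᴴ * Q = 1)
    (BL BR : Matrix (Fin l) (Fin m) ℂ)
    (Ut : Matrix (Fin l) (Fin k) ℂ) (V : Matrix (Fin m) (Fin k) ℂ)
    (S : Matrix (Fin k) (Fin k) ℂ)
    (σ : Fin k → ℝ) (hσ : ∀ i, 0 < σ i)
    (hS : S = Matrix.diagonal fun i => (σ i : ℂ))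
    (hUt : Utᴴ * Ut = 1) (hV : Vᴴ * V = 1)
    (hSVD : BL = Ut * S * Vᴴ)
    (WtB Λ : Matrix (Fin k) (Fin k) ℂ) (hΛ : Λ.IsDiag)
    (heig : (Utᴴ * BR * V * S⁻¹) * WtB = WtB * Λ) :
    ((Q * BR) * V * S⁻¹ * Utᴴ * Qᴴ) * (Q * BR * V * S⁻¹ * WtB)
      = (Q * BR * V * S⁻¹ * WtB) * Λ := by
  calc ((Q * BR) * V * S⁻¹ * Utᴴ * Qᴴ) * (Q * BR * V * S⁻¹ * WtB)
      = Q * (BR * (V * (S⁻¹ * ((Utᴴ * BR * V * S⁻¹) * WtB)))) := by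
        simp only [Matrix.mul_assoc, ← Matrix.mul_assoc Qᴴ Q, hQ, Matrix.one_mul]
    _ = Q * (BR * (V * (S⁻¹ * (WtB * Λ)))) := by rw [heig]
    _ = (Q * BR * V * S⁻¹ * WtB) * Λ := by simp only [Matrix.mul_assoc]
end

section
/- Let X_L, X_R ∈ ℂ^{n×m} and let X_L = U Σ Vᴴ be an economic SVD of rank r of X_L. Then Â := X_R V Σ⁻¹ Uᴴ (i.e. Â = X_R X_L†) solves the DMD least-squares problem: for every A ∈ ℂ^{n×n}, ‖X_R − Â X_L‖_F ≤ ‖X_R − A X_L‖_F. -/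
open Matrix

/-- The Frobenius norm of a complex matrix. -/
noncomputable def frobNorm {ι κ : Type*} [Fintype ι] [Fintype κ]
    (M : Matrix ι κ ℂ) : ℝ :=
  Real.sqrt (∑ i, ∑ j, ‖M i j‖ ^ 2)

/-!
With the orthogonal projection `P := V Vᴴ` one has `X_L P = X_L`
and `X_L† X_L = P`, so the residual of `Â` is `X_R (1 - P) = (X_R - A X_L)(1 - P)` for every `A`.
Right multiplication by the orthogonal projection `1 - P` cannot increase the Frobenius norm, by
Pythagoras: `‖B‖² = ‖B P‖² + ‖B (1 - P)‖²`.
-/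

section Projection

variable {R : Type*} [CommRing R] [StarRing R] {l m r : Type*} [Fintype r] [DecidableEq r]

lemma mul_conjTranspose_mul_mul_conjTranspose [Fintype m] {V : Matrix m r R} (hV : Vᴴ * V = 1)
    (W : Matrix l r R) : W * Vᴴ * (V * Vᴴ) = W * Vᴴ := by
  rw [Matrix.mul_assoc, ← Matrix.mul_assoc Vᴴ, hV, Matrix.one_mul]

lemma isStarProjection_mul_conjTranspose_self [Fintype m] {V : Matrix m r R}
    (hV : Vᴴ * V = 1) : IsStarProjection (V * Vᴴ) where
  isIdempotentElem := mul_conjTranspose_mul_mul_conjTranspose hV V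
  isSelfAdjoint := isHermitian_mul_conjTranspose_self V

lemma svd_pinv_mul_self [Fintype l] {U : Matrix l r R} {V : Matrix m r R} {S : Matrix r r R}
    (hU : Uᴴ * U = 1) (hS : IsUnit S.det) :
    V * S⁻¹ * Uᴴ * (U * S * Vᴴ) = V * Vᴴ := by
  calc V * S⁻¹ * Uᴴ * (U * S * Vᴴ) = V * (S⁻¹ * (Uᴴ * U) * S) * Vᴴ := by
        simp only [Matrix.mul_assoc]
    _ = V * Vᴴ := by rw [hU, Matrix.mul_one, nonsing_inv_mul S hS, Matrix.mul_one]

lemma trace_conjTranspose_mul_self_mul_of_isStarProjection [Fintype l] [Fintype m]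
    {P : Matrix m m R} (hP : IsStarProjection P) (B : Matrix l m R) :
    ((B * P)ᴴ * (B * P)).trace = (Bᴴ * B * P).trace := by
  have hPh : Pᴴ = P := hP.isSelfAdjoint
  rw [conjTranspose_mul, hPh, Matrix.mul_assoc, trace_mul_comm]
  simp only [Matrix.mul_assoc, hP.isIdempotentElem.eq]

end Projection

section Frobenius

variable {ι κ : Type*} [Fintype ι] [Fintype κ]

lemma frobNorm_sq_eq_re_trace (M : Matrix ι κ ℂ) : frobNorm M ^ 2 = (Mᴴ * M).trace.re := by
  rw [frobNorm, Real.sq_sqrt (by positivity), Finset.sum_comm]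
  simp only [trace, diag, mul_apply, conjTranspose_apply, Complex.re_sum, RCLike.star_def,
    Complex.conj_mul', ← Complex.ofReal_pow, Complex.ofReal_re]

variable [DecidableEq κ]

lemma frobNorm_mul_sq_add_frobNorm_mul_one_sub_sq {P : Matrix κ κ ℂ} (hP : IsStarProjection P)
    (B : Matrix ι κ ℂ) :
    frobNorm (B * P) ^ 2 + frobNorm (B * (1 - P)) ^ 2 = frobNorm B ^ 2 := by
  rw [frobNorm_sq_eq_re_trace, frobNorm_sq_eq_re_trace, frobNorm_sq_eq_re_trace,
    trace_conjTranspose_mul_self_mul_of_isStarProjection hP,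
    trace_conjTranspose_mul_self_mul_of_isStarProjection hP.one_sub, ← Complex.add_re,
    ← trace_add, ← Matrix.mul_add, add_sub_cancel, Matrix.mul_one]

lemma frobNorm_mul_le_of_isStarProjection {P : Matrix κ κ ℂ} (hP : IsStarProjection P)
    (B : Matrix ι κ ℂ) : frobNorm (B * P) ≤ frobNorm B := by
  have h := frobNorm_mul_sq_add_frobNorm_mul_one_sub_sq hP B
  refine le_of_pow_le_pow_left₀ two_ne_zero (Real.sqrt_nonneg _) ?_
  nlinarith [sq_nonneg (frobNorm (B * (1 - P)))]

end Frobenius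

/-- `Â = X_R V Σ⁻¹ Uᴴ = X_R X_L†` solves the DMD least-squares
problem `min_A ‖X_R − A X_L‖_F`. -/
theorem dmd_least_squares_minimizer
    {n m r : ℕ}
    (XL XR : Matrix (Fin n) (Fin m) ℂ)
    (U : Matrix (Fin n) (Fin r) ℂ) (V : Matrix (Fin m) (Fin r) ℂ)
    (S : Matrix (Fin r) (Fin r) ℂ)
    (σ : Fin r → ℝ) (hσ : ∀ i, 0 < σ i)
    (hS : S = Matrix.diagonal fun i => (σ i : ℂ))
    (hU : Uᴴ * U = 1) (hV : Vᴴ * V = 1)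
    (hSVD : XL = U * S * Vᴴ) :
    ∀ A : Matrix (Fin n) (Fin n) ℂ,
      frobNorm (XR - (XR * (V * S⁻¹ * Uᴴ)) * XL) ≤ frobNorm (XR - A * XL) := by
  intro A
  have hSdet : IsUnit S.det := by
    rw [hS, det_diagonal]
    exact IsUnit.mk0 _ (Finset.prod_ne_zero_iff.mpr fun i _ => by exact_mod_cast (hσ i).ne')
  have hpinv : V * S⁻¹ * Uᴴ * XL = V * Vᴴ := hSVD ▸ svd_pinv_mul_self hU hSdet
  have hXL_compl : XL * (1 - V * Vᴴ) = 0 := by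
    rw [Matrix.mul_sub, Matrix.mul_one, hSVD, mul_conjTranspose_mul_mul_conjTranspose hV, sub_self]
  have hresidual : XR - XR * (V * S⁻¹ * Uᴴ) * XL = (XR - A * XL) * (1 - V * Vᴴ) := by
    rw [Matrix.mul_assoc XR, hpinv, Matrix.sub_mul, Matrix.mul_assoc A, hXL_compl,
      Matrix.mul_zero, sub_zero, Matrix.mul_sub, Matrix.mul_one]
  rw [hresidual]
  exact frobNorm_mul_le_of_isStarProjection (isStarProjection_mul_conjTranspose_self hV).one_sub _
end
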